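/- arXiv:1012.5710 — 5 statements merged into one kernel-verified Lean document; each statement's English description precedes it below -/
import Mathlib

section
/- The complete bipartite graph K_{a,b} contains exactly ⌊ab/(a+b-1)⌋ pairwise edge-disjoint spanning trees, for positive integers a, b. -/
/-- A family of `n` pairwise edge-disjoint spanning trees of `G`. -/
def EdgeDisjointSpanningTrees {V : Type*} (G : SimpleGraph V) (n : ℕ) : Prop :=
  ∃ T : Fin n → G.Subgraph,
    (∀ i, (T i).IsSpanning ∧ (T i).coe.IsTree) ∧
    ∀ i j, i ≠ j → (T i).edgeSet ∩ (T j).edgeSet = ∅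

/-!
Each spanning tree of `K_{a,b}` has `a + b - 1` of its `a * b` edges, so `k` edge-disjoint ones
force `k * (a + b - 1) ≤ a * b`. Conversely, view the edges as the cells of an `a × b` grid. A
staircase that runs through the rows `0, …, a - 1`, covering the columns `u r, …, u (r + 1)`
(mod `b`) in row `r`, with `u a = u 0 + (b - 1)`, is a spanning tree: consecutive rows share a
column, every column is reached, and it has `a + b - 1` cells. Taking for tree `i` the staircase
of slope `(b - 1) / a` started `i` rows later and shifted `i` columns, the `k` trees occupy
consecutive disjoint blocks of each row inside a window of at most `b` positions, so their cells
are distinct mod `b` as soon as `k * (a + b - 1) ≤ a * b`.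
-/

open SimpleGraph Function

section SpanningTrees

variable {V : Type*}

lemma SimpleGraph.Subgraph.IsSpanning.coe_isTree_iff {G : SimpleGraph V} {H : G.Subgraph}
    (h : H.IsSpanning) : H.coe.IsTree ↔ H.spanningCoe.IsTree :=
  (H.spanningCoeEquivCoeOfSpanning h).isTree_iff.symm

lemma SimpleGraph.IsTree.card_edgeSet_add_one [Finite V] {G : SimpleGraph V} (h : G.IsTree) :
    Nat.card G.edgeSet + 1 = Nat.card V :=
  (isTree_iff_connected_and_card.mp h).2

lemma EdgeDisjointSpanningTrees.mul_card_sub_one_le [Finite V] {G : SimpleGraph V} {n : ℕ}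
    (h : EdgeDisjointSpanningTrees G n) : n * (Nat.card V - 1) ≤ Nat.card G.edgeSet := by
  obtain ⟨T, hT, hdisj⟩ := h
  have hcard (i : Fin n) : Nat.card (T i).edgeSet = Nat.card V - 1 := by
    have := ((hT i).1.coe_isTree_iff.mp (hT i).2).card_edgeSet_add_one
    rw [Subgraph.edgeSet_spanningCoe] at this
    omega
  let incl : (Σ i, (T i).edgeSet) → G.edgeSet := fun e => ⟨e.2, (T e.1).edgeSet_subset e.2.2⟩
  have hincl : incl.Injective := by
    rintro ⟨i, e, he⟩ ⟨j, e', he'⟩ heq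
    obtain rfl : e = e' := congrArg Subtype.val heq
    obtain rfl : i = j := by
      by_contra hij
      exact (hdisj i j hij).subset ⟨he, he'⟩
    rfl
  calc n * (Nat.card V - 1) = Nat.card (Σ i, (T i).edgeSet) := by simp [Nat.card_sigma, hcard]
    _ ≤ Nat.card G.edgeSet := Nat.card_le_card_of_injective incl hincl

lemma EdgeDisjointSpanningTrees.of_isTree {G : SimpleGraph V} {n : ℕ}
    (H : Fin n → SimpleGraph V) (hle : ∀ i, H i ≤ G) (htree : ∀ i, (H i).IsTree)
    (hdisj : Pairwise (Disjoint on H)) :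
    EdgeDisjointSpanningTrees G n := by
  refine ⟨fun i => toSubgraph (H i) (hle i), fun i => ⟨toSubgraph.isSpanning _ _, ?_⟩,
    fun i j hij => ?_⟩
  · exact (toSubgraph.isSpanning _ _).coe_isTree_iff.mpr (htree i)
  · rw [← Subgraph.edgeSet_spanningCoe, ← Subgraph.edgeSet_spanningCoe,
      ← Set.disjoint_iff_inter_eq_empty]
    exact disjoint_edgeSet.mpr (hdisj hij)

end SpanningTrees

namespace SimpleGraph

variable {α β : Type*}

def bipartiteOf (S : Set (α × β)) : SimpleGraph (α ⊕ β) where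
  Adj
    | .inl x, .inr y => (x, y) ∈ S
    | .inr y, .inl x => (x, y) ∈ S
    | _, _ => False
  symm := ⟨by rintro (_ | _) (_ | _) h <;> exact h⟩
  loopless := ⟨by rintro (_ | _) h <;> exact h⟩

@[simp]
lemma bipartiteOf_adj_inl_inr {S : Set (α × β)} {x : α} {y : β} :
    (bipartiteOf S).Adj (.inl x) (.inr y) ↔ (x, y) ∈ S :=
  Iff.rfl

lemma bipartiteOf_le (S : Set (α × β)) : bipartiteOf S ≤ completeBipartiteGraph α β := by
  rintro (_ | _) (_ | _) h <;> simp_all [bipartiteOf]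

lemma disjoint_bipartiteOf {S T : Set (α × β)} (h : Disjoint S T) :
    Disjoint (bipartiteOf S) (bipartiteOf T) := by
  rw [disjoint_iff_inf_le]
  rintro (x | y) (x' | y') ⟨hS, hT⟩
  exacts [hS.elim, h.ne_of_mem hS hT rfl, h.ne_of_mem hS hT rfl, hS.elim]

lemma card_edgeSet_of_le_completeBipartiteGraph {H : SimpleGraph (α ⊕ β)}
    (hH : H ≤ completeBipartiteGraph α β) :
    Nat.card H.edgeSet = Nat.card {p : α × β // H.Adj (.inl p.1) (.inr p.2)} := by
  symm
  refine Nat.card_congr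
    (Equiv.ofBijective (fun p => ⟨s(.inl p.1.1, .inr p.1.2), p.2⟩) ⟨?_, ?_⟩)
  · rintro ⟨⟨x, y⟩, _⟩ ⟨⟨x', y'⟩, _⟩ h
    simpa using congrArg Subtype.val h
  · rintro ⟨e, he⟩
    induction e using Sym2.ind with
    | _ v w =>
      rcases v with x | y <;> rcases w with x' | y'
      · simpa using hH he
      · exact ⟨⟨(x, y'), he⟩, rfl⟩
      · exact ⟨⟨(x', y), he.symm⟩, Subtype.ext Sym2.eq_swap⟩
      · simpa using hH he

lemma card_edgeSet_completeBipartiteGraph [Finite α] [Finite β] :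
    Nat.card (completeBipartiteGraph α β).edgeSet = Nat.card α * Nat.card β := by
  rw [card_edgeSet_of_le_completeBipartiteGraph le_rfl]
  simp

lemma card_edgeSet_bipartiteOf (S : Set (α × β)) :
    Nat.card (bipartiteOf S).edgeSet = Nat.card S :=
  card_edgeSet_of_le_completeBipartiteGraph (bipartiteOf_le S)

end SimpleGraph

namespace Fin

open Fin.NatCast

lemma natCast_injOn_Ico {b : ℕ} [NeZero b] (m : ℕ) :
    Set.InjOn (Nat.cast : ℕ → Fin b) (Set.Ico m (m + b)) := by
  intro x hx y hy h
  have hxy : x % b = y % b := by simpa [Fin.ext_iff, Fin.val_natCast] using h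
  refine Nat.ModEq.eq_of_abs_lt hxy ?_
  rw [abs_sub_lt_iff]
  simp only [Set.mem_Ico] at hx hy
  omega

lemma natCast_surjOn_Ico {b : ℕ} [NeZero b] (m : ℕ) :
    Set.SurjOn (Nat.cast : ℕ → Fin b) (Set.Ico m (m + b)) Set.univ := by
  intro c _
  have hinj : Injective fun j : Fin b => ((m + j : ℕ) : Fin b) := fun j j' h =>
    Fin.ext (by simpa using natCast_injOn_Ico m (by simp) (by simp) h)
  obtain ⟨j, rfl⟩ := Finite.injective_iff_surjective.mp hinj c
  exact ⟨m + j, by simp, rfl⟩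

end Fin

lemma Nat.exists_lt_mem_Icc (u : ℕ → ℕ) {n x : ℕ} (hn : 0 < n) (hx₀ : u 0 ≤ x)
    (hxn : x ≤ u n) : ∃ r < n, x ∈ Set.Icc (u r) (u (r + 1)) := by
  induction n with
  | zero => omega
  | succ n ih =>
    by_cases h : 0 < n ∧ x ≤ u n
    · obtain ⟨r, hr, hx⟩ := ih h.1 h.2
      exact ⟨r, by omega, hx⟩
    · refine ⟨n, by omega, ?_, hxn⟩
      rcases Nat.eq_zero_or_pos n with rfl | hpos
      · exact hx₀
      · exact (lt_of_not_ge (h ⟨hpos, ·⟩)).le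

open Finset Fin.NatCast

section Staircase

variable {a b : ℕ} [NeZero b]

def staircase (a b : ℕ) [NeZero b] (u : ℕ → ℕ) : Finset (Fin a × Fin b) :=
  (univ.sigma fun r : Fin a => Icc (u r) (u (r + 1))).image fun p => (p.1, (p.2 : Fin b))

lemma mem_staircase {u : ℕ → ℕ} {r : Fin a} {c : Fin b} :
    (r, c) ∈ staircase a b u ↔ ∃ x, u r ≤ x ∧ x ≤ u (r + 1) ∧ (x : Fin b) = c := by
  simp [staircase, and_assoc]

variable {u : ℕ → ℕ} (hu : Monotone u) (hua : u a = u 0 + (b - 1))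
include hu hua

lemma card_staircase : #(staircase a b u) = a + b - 1 := by
  have hb : 0 < b := Nat.pos_of_neZero b
  rw [staircase, card_image_of_injOn, card_sigma]
  · have hrow (r : ℕ) : #(Icc (u r) (u (r + 1))) = u (r + 1) - u r + 1 := by
      have := hu (Nat.le_add_right r 1)
      simp only [Nat.card_Icc]
      omega
    simp only [hrow, Fin.sum_univ_eq_sum_range (fun r => u (r + 1) - u r + 1), sum_add_distrib,
      sum_range_tsub hu, sum_const, card_range, smul_eq_mul, mul_one]
    omega
  · rintro ⟨r, x⟩ hx ⟨r', x'⟩ hx' h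
    simp only [coe_sigma, Set.mem_sigma_iff, coe_Icc, Set.mem_Icc, Prod.mk.injEq] at hx hx' h
    obtain ⟨rfl, h⟩ := h
    have h0 := hu (Nat.zero_le r)
    have ha := hu (show (r : ℕ) + 1 ≤ a from r.2)
    rw [Fin.natCast_injOn_Ico (b := b) (u 0) (by simp; omega) (by simp; omega) h]

lemma connected_bipartiteOf_staircase [NeZero a] :
    (bipartiteOf (staircase a b u : Set (Fin a × Fin b))).Connected := by
  set G := bipartiteOf (staircase a b u : Set (Fin a × Fin b))
  have hrow : ∀ (n : ℕ) (hn : n < a), G.Reachable (.inl 0) (.inl ⟨n, hn⟩) := by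
    intro n
    induction n with
    | zero => intro _; rfl
    | succ n ih =>
      intro hn
      have hadj (m : ℕ) (hm : m < a) (hx : u m ≤ u (n + 1)) (hx' : u (n + 1) ≤ u (m + 1)) :
          G.Adj (.inl ⟨m, hm⟩) (.inr (u (n + 1) : Fin b)) := by
        simp only [G, bipartiteOf_adj_inl_inr, mem_coe, mem_staircase]
        exact ⟨u (n + 1), hx, hx', rfl⟩
      exact (ih (by omega)).trans ((hadj n (by omega) (hu (by omega)) le_rfl).reachable.trans
        (hadj (n + 1) hn le_rfl (hu (by omega))).reachable.symm)
  have hcol (c : Fin b) : ∃ r : Fin a, G.Adj (.inl r) (.inr c) := by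
    obtain ⟨x, ⟨hx0, hxb⟩, rfl⟩ :=
      Fin.natCast_surjOn_Ico (b := b) (u 0) (Set.mem_univ c)
    obtain ⟨r, hr, hxr⟩ := Nat.exists_lt_mem_Icc u (Nat.pos_of_neZero a) hx0 (by omega)
    exact ⟨⟨r, hr⟩, mem_staircase.mpr ⟨x, hxr.1, hxr.2, rfl⟩⟩
  rw [connected_iff_exists_forall_reachable]
  refine ⟨.inl 0, ?_⟩
  rintro (⟨n, hn⟩ | c)
  · exact hrow n hn
  · obtain ⟨⟨n, hn⟩, hadj⟩ := hcol c
    exact (hrow n hn).trans hadj.reachable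

lemma isTree_bipartiteOf_staircase [NeZero a] :
    (bipartiteOf (staircase a b u : Set (Fin a × Fin b))).IsTree := by
  refine isTree_iff_connected_and_card.mpr
    ⟨connected_bipartiteOf_staircase hu hua, ?_⟩
  have := Nat.pos_of_neZero a
  rw [card_edgeSet_bipartiteOf, Nat.card_coe_set_eq, Set.ncard_coe_finset,
    card_staircase hu hua, Nat.card_sum, Nat.card_fin, Nat.card_fin]
  omega

end Staircase

def breakpoints (a b i : ℕ) (r : ℕ) : ℕ := (i + r) * (b - 1) / a + i

section Breakpoints

variable {a b : ℕ}

lemma monotone_breakpoints (i : ℕ) : Monotone (breakpoints a b i) := fun _ _ h =>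
  Nat.add_le_add_right (Nat.div_le_div_right (Nat.mul_le_mul_right _ (by omega))) _

lemma breakpoints_self (ha : 0 < a) (i : ℕ) :
    breakpoints a b i a = breakpoints a b i 0 + (b - 1) := by
  simp only [breakpoints, add_zero, add_mul _ a, Nat.add_mul_div_left _ _ ha]
  omega

lemma div_add_le_of_mul_le (ha : 0 < a) (hb : 0 < b) {k : ℕ} (hk : k * (a + b - 1) ≤ a * b)
    (r : ℕ) : (r + k) * (b - 1) / a + k ≤ r * (b - 1) / a + b := by
  have hkb : k ≤ b := by
    refine Nat.le_of_mul_le_mul_right ?_ ha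
    calc k * a ≤ k * (a + b - 1) := Nat.mul_le_mul_left k (by omega)
      _ ≤ b * a := by rwa [mul_comm b]
  have hmul : (r + k) * (b - 1) ≤ r * (b - 1) + a * (b - k) := by
    have hsplit : k * (a + b - 1) = k * (b - 1) + k * a := by
      rw [← mul_add]; congr 1; omega
    have hak : k * a ≤ a * b := mul_comm a k ▸ Nat.mul_le_mul_left a hkb
    rw [add_mul, Nat.mul_sub_left_distrib a b k, mul_comm a k]
    omega
  calc (r + k) * (b - 1) / a + k ≤ (r * (b - 1) + a * (b - k)) / a + k :=
        Nat.add_le_add_right (Nat.div_le_div_right hmul) k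
    _ = r * (b - 1) / a + b := by rw [Nat.add_mul_div_left _ _ ha]; omega

lemma breakpoints_succ_lt_of_lt {i j : ℕ} (hij : i < j) (r : ℕ) :
    breakpoints a b i (r + 1) < breakpoints a b j r :=
  Nat.add_lt_add_of_le_of_lt (Nat.div_le_div_right (Nat.mul_le_mul_right _ (by omega))) hij

lemma breakpoints_succ_lt_add (ha : 0 < a) (hb : 0 < b) {i j k : ℕ}
    (hk : k * (a + b - 1) ≤ a * b) (hjk : j < k) (r : ℕ) :
    breakpoints a b j (r + 1) < breakpoints a b i r + b := calc
  breakpoints a b j (r + 1) ≤ (r + k) * (b - 1) / a + (k - 1) :=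
    Nat.add_le_add (Nat.div_le_div_right (Nat.mul_le_mul_right _ (by omega))) (by omega)
  _ < r * (b - 1) / a + b := by have := div_add_le_of_mul_le ha hb hk r; omega
  _ ≤ breakpoints a b i r + b :=
    Nat.add_le_add_right (Nat.le_add_right_of_le
      (Nat.div_le_div_right (Nat.mul_le_mul_right _ (by omega)))) b

lemma disjoint_staircase_breakpoints [NeZero a] [NeZero b] {i j k : ℕ}
    (hk : k * (a + b - 1) ≤ a * b) (hij : i < j) (hjk : j < k) :
    Disjoint (staircase a b (breakpoints a b i)) (staircase a b (breakpoints a b j)) := by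
  rw [Finset.disjoint_left]
  rintro ⟨r, c⟩ hi hj
  obtain ⟨x, hx, hx', rfl⟩ := mem_staircase.mp hi
  obtain ⟨y, hy, hy', hxy⟩ := mem_staircase.mp hj
  have hxy_lt := breakpoints_succ_lt_of_lt (a := a) (b := b) hij r
  have hy_lt :=
    breakpoints_succ_lt_add (i := i) (Nat.pos_of_neZero a) (Nat.pos_of_neZero b) hk hjk r
  have := Fin.natCast_injOn_Ico (b := b) x (by simp; omega) (by simp; omega) hxy.symm
  omega

end Breakpoints

lemma edgeDisjointSpanningTrees_completeBipartiteGraph_iff {a b k : ℕ} [NeZero a] [NeZero b] :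
    EdgeDisjointSpanningTrees (completeBipartiteGraph (Fin a) (Fin b)) k ↔
      k * (a + b - 1) ≤ a * b := by
  refine ⟨fun h => ?_, fun hk => ?_⟩
  · have := h.mul_card_sub_one_le
    rwa [card_edgeSet_completeBipartiteGraph, Nat.card_sum, Nat.card_fin, Nat.card_fin] at this
  · refine .of_isTree (fun i => bipartiteOf (staircase a b (breakpoints a b i)))
      (fun _ => bipartiteOf_le _)
      (fun i => isTree_bipartiteOf_staircase (monotone_breakpoints i)
        (breakpoints_self (Nat.pos_of_neZero a) i)) ?_
    rw [pairwise_disjoint_on]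
    exact fun i j hij => disjoint_bipartiteOf
      (Finset.disjoint_coe.mpr (disjoint_staircase_breakpoints hk hij j.2))

theorem stmt_1 (a b : ℕ) (ha : 1 ≤ a) (hb : 1 ≤ b) :
    IsGreatest {n | EdgeDisjointSpanningTrees (completeBipartiteGraph (Fin a) (Fin b)) n}
      (a * b / (a + b - 1)) := by
  have : NeZero a := ⟨by omega⟩
  have : NeZero b := ⟨by omega⟩
  have hpos : 0 < a + b - 1 := by omega
  have key := @edgeDisjointSpanningTrees_completeBipartiteGraph_iff a b
  exact ⟨key.mpr (Nat.div_mul_le_self _ _),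
    fun n hn => (Nat.le_div_iff_mul_le hpos).mpr (key.mp hn)⟩
end

section
/- Let a ≤ b be positive integers, let d_1, ..., d_a be positive integers with d_1 + ... + d_a = a+b-1 such that all cyclic window sums of equal length differ by at most 1 (i.e., |D_i^t - D_j^t| ≤ 1 for all i,j,t where D_j^t = d_j + ... + d_{j+t-1} with indices mod a). Then for t' = ⌊ab/(a+b-1)⌋, every cyclic window sum of length t' satisfies D_j^{t'} ≤ b. -/
/-!
Summing the window sums of length `t` over all `a` starting points counts every `d x` exactly
`t` times, so their total is `t (a + b - 1) ≤ a b` when `t = ⌊a b / (a + b - 1)⌋`. Since every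
window sum is at least `D_j - 1` and the `j`-th equals `D_j`, this total is at least
`a D_j - (a - 1)`, forcing `D_j ≤ b`.
-/

open Finset

theorem Finset.sum_univ_sum_comp_add {G M κ : Type*} [AddGroup G] [Fintype G] [AddCommMonoid M]
    (d : G → M) (s : Finset κ) (g : κ → G) :
    ∑ i, ∑ k ∈ s, d (i + g k) = #s • ∑ x, d x := by
  rw [Finset.sum_comm, ← Finset.sum_const]
  exact Finset.sum_congr rfl fun k _ => Equiv.sum_comp (Equiv.addRight (g k)) d

theorem Fintype.card_mul_add_one_le_sum_add_card {ι : Type*} [Fintype ι] (D : ι → ℕ) (j : ι)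
    (h : ∀ i, D j ≤ D i + 1) :
    Fintype.card ι * D j + 1 ≤ ∑ i, D i + Fintype.card ι := by
  have hlt : ∑ _i : ι, D j < ∑ i, (D i + 1) :=
    Finset.sum_lt_sum (fun i _ => h i) ⟨j, Finset.mem_univ j, Nat.lt_succ_self _⟩
  simpa [Finset.sum_add_distrib] using hlt

theorem stmt_6_general (a b : ℕ) [NeZero a]
    (d : ZMod a → ℕ)
    (hsum : ∑ x : ZMod a, d x = a + b - 1)
    (hwin : ∀ t : ℕ, ∀ i j : ZMod a,
      (∑ m ∈ Finset.range t, d (i + (m : ZMod a))) ≤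
        (∑ m ∈ Finset.range t, d (j + (m : ZMod a))) + 1) :
    ∀ j : ZMod a,
      (∑ m ∈ Finset.range (a * b / (a + b - 1)), d (j + (m : ZMod a))) ≤ b := by
  intro j
  set t := a * b / (a + b - 1)
  have htotal : ∑ i : ZMod a, ∑ m ∈ range t, d (i + (m : ZMod a)) = t * (a + b - 1) := by
    rw [Finset.sum_univ_sum_comp_add d (range t) (fun m : ℕ => (m : ZMod a)), hsum, card_range,
      smul_eq_mul]
  have hbound := Fintype.card_mul_add_one_le_sum_add_card
    (fun i : ZMod a => ∑ m ∈ range t, d (i + (m : ZMod a))) j (hwin t j)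
  rw [ZMod.card, htotal] at hbound
  have hfloor : t * (a + b - 1) ≤ a * b := Nat.div_mul_le_self (a * b) (a + b - 1)
  refine Nat.lt_succ_iff.mp (Nat.lt_of_mul_lt_mul_left (a := a) ?_)
  rw [Nat.mul_succ]
  omega

theorem stmt_6 (a b : ℕ) [NeZero a] (hab : a ≤ b)
    (d : ZMod a → ℕ) (hpos : ∀ x, 0 < d x)
    (hsum : ∑ x : ZMod a, d x = a + b - 1)
    (hwin : ∀ t : ℕ, ∀ i j : ZMod a,
      (∑ m ∈ Finset.range t, d (i + (m : ZMod a))) ≤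
        (∑ m ∈ Finset.range t, d (j + (m : ZMod a))) + 1) :
    ∀ j : ZMod a,
      (∑ m ∈ Finset.range (a * b / (a + b - 1)), d (j + (m : ZMod a))) ≤ b :=
  stmt_6_general a b d hsum hwin
end

section
/- For positive integers a ≤ b and any integer k with 2 ≤ k ≤ b-a+2, the k-connectivity of the complete bipartite graph K_{a,b} equals a. -/
/-- `ℓ` pairwise edge-disjoint trees in `G`, each containing `S`, whose pairwise
vertex intersections equal exactly `S` (an internally disjoint set of trees connecting `S`). -/
def InternallyDisjointTrees {V : Type*} (G : SimpleGraph V) (S : Set V) (ℓ : ℕ) : Prop :=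
  ∃ T : Fin ℓ → G.Subgraph,
    (∀ n, (T n).coe.IsTree) ∧
    (∀ n, S ⊆ (T n).verts) ∧
    (∀ m n, m ≠ n → (T m).verts ∩ (T n).verts = S) ∧
    (∀ m n, m ≠ n → (T m).edgeSet ∩ (T n).edgeSet = ∅)

/-- `κ(S)`: the maximum number of internally disjoint trees connecting `S`. -/
noncomputable def kappaS {V : Type*} (G : SimpleGraph V) (S : Set V) : ℕ :=
  sSup {ℓ | InternallyDisjointTrees G S ℓ}

/-- The `k`-connectivity `κ_k(G)`: the minimum of `κ(S)` over all `k`-subsets `S`. -/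
noncomputable def kappaK {V : Type*} (G : SimpleGraph V) (k : ℕ) : ℕ :=
  sInf {n | ∃ S : Set V, S.ncard = k ∧ kappaS G S = n}

/-!
Upper bound: a tree connecting a set `S ∋ x` of at least two vertices contains an edge at `x`,
so edge-disjointness gives `κ(S) ≤ deg x`, and a right vertex of `K_{a,b}` has degree `a`.

Lower bound: write `S = A ⊔ B` with `A` on the left and `B` on the right. For every left vertex
`i` take the double star on the edge `i ρ(i)`, where `i` is joined to all of `B` and `ρ(i)` to
all of `A`. These `a` trees are internally disjoint as soon as the right centres `ρ(i)` are
distinct and outside `B`, which is possible when `|B| ≤ b - a`. Otherwise `|A| ≤ 1` because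
`|A| + |B| ≤ b - a + 2`: if `A = ∅` all centres can be one vertex of `B`, and if `A = {u}` one
takes `ρ(u) ∈ B` and the other `a - 1` centres distinct outside `B`.
-/

open SimpleGraph

namespace SimpleGraph

variable {V : Type*} {G : SimpleGraph V}

/-- A cycle has at least three vertices, so one of them avoids `u` and `v`; but it has two
distinct neighbours on the cycle. -/
lemma isAcyclic_of_subsingleton_neighborSet (u v : V)
    (h : ∀ w, w ≠ u → w ≠ v → (G.neighborSet w).Subsingleton) : G.IsAcyclic := by
  classical
  intro w₀ c hc
  obtain ⟨w, hw, hwu, hwv⟩ : ∃ w ∈ c.support, w ≠ u ∧ w ≠ v := by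
    by_contra! hall
    have hle : c.support.tail.length ≤ [u, v].length :=
      hc.support_nodup.length_le_of_subset fun w hw => by
        simpa using or_iff_not_imp_left.mpr (hall w (List.mem_of_mem_tail hw))
    have := hc.three_le_length
    simp only [List.length_tail, Walk.length_support, List.length_cons, List.length_nil] at hle
    omega
  have hc' := (Walk.isCycle_rotate hw).mpr hc
  exact hc'.snd_ne_penultimate <| h w hwu hwv (Walk.adj_snd hc'.not_nil)
    (Walk.adj_penultimate hc'.not_nil).symm

lemma Subgraph.exists_adj_of_connected {T : G.Subgraph} (hT : T.coe.Connected) {x y : V}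
    (hx : x ∈ T.verts) (hy : y ∈ T.verts) (hxy : x ≠ y) : ∃ z, T.Adj x z := by
  have : Nontrivial T.verts := ⟨⟨x, hx⟩, ⟨y, hy⟩, by simpa using hxy⟩
  obtain ⟨z, hz⟩ := exists_adj_iff_not_isIsolated.mpr (hT.preconnected.not_isIsolated ⟨x, hx⟩)
  exact ⟨z, hz⟩

end SimpleGraph

section InternallyDisjointTrees

variable {V : Type*} {G : SimpleGraph V} {S : Set V}

lemma internallyDisjointTrees_of_pairwise {ι : Type*} [Fintype ι] (T : ι → G.Subgraph)
    (htree : ∀ i, (T i).coe.IsTree) (hS : ∀ i, S ⊆ (T i).verts)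
    (hverts : Pairwise fun i j => (T i).verts ∩ (T j).verts = S)
    (hedges : Pairwise fun i j => Disjoint (T i).edgeSet (T j).edgeSet) :
    InternallyDisjointTrees G S (Fintype.card ι) := by
  let e := (Fintype.equivFin ι).symm
  exact ⟨T ∘ e, fun n => htree _, fun n => hS _, fun m n h => hverts (e.injective.ne h),
    fun m n h => Set.disjoint_iff_inter_eq_empty.mp (hedges (e.injective.ne h))⟩

lemma InternallyDisjointTrees.le_card_neighborSet {ℓ : ℕ} (h : InternallyDisjointTrees G S ℓ)
    {x y : V} (hx : x ∈ S) (hy : y ∈ S) (hxy : x ≠ y) [Finite (G.neighborSet x)] :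
    ℓ ≤ Nat.card (G.neighborSet x) := by
  obtain ⟨T, htree, hS, -, hedges⟩ := h
  choose z hz using fun n =>
    (T n).exists_adj_of_connected (htree n).connected (hS n hx) (hS n hy) hxy
  have hinj : Function.Injective fun n => (⟨z n, (hz n).adj_sub⟩ : G.neighborSet x) := by
    intro m n hmn
    by_contra hne
    have hmem : s(x, z m) ∈ (T m).edgeSet ∩ (T n).edgeSet :=
      ⟨hz m, by rw [Subtype.mk.inj hmn]; exact hz n⟩
    rwa [hedges m n hne] at hmem
  simpa only [Nat.card_fin] using Nat.card_le_card_of_injective _ hinj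

lemma kappaS_le_card_neighborSet (hS : 1 < S.ncard) {x : V} (hx : x ∈ S)
    [Finite (G.neighborSet x)] : kappaS G S ≤ Nat.card (G.neighborSet x) := by
  obtain ⟨y, hy, hyx⟩ := Set.exists_ne_of_one_lt_ncard hS x
  exact csSup_le' fun ℓ h => h.le_card_neighborSet hx hy hyx.symm

lemma InternallyDisjointTrees.le_kappaS [Finite V] {ℓ : ℕ} (h : InternallyDisjointTrees G S ℓ)
    (hS : 1 < S.ncard) : ℓ ≤ kappaS G S := by
  obtain ⟨x, y, hx, hy, hxy⟩ := (Set.one_lt_ncard_iff (Set.toFinite S)).mp hS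
  exact le_csSup ⟨_, fun ℓ h' => h'.le_card_neighborSet hx hy hxy⟩ h

end InternallyDisjointTrees

lemma Set.ncard_preimage_inl_add_ncard_preimage_inr {α β : Type*} [Finite α] [Finite β]
    (S : Set (α ⊕ β)) : (Sum.inl ⁻¹' S).ncard + (Sum.inr ⁻¹' S).ncard = S.ncard := by
  conv_rhs => rw [← Set.image_preimage_inl_union_image_preimage_inr S]
  rw [Set.ncard_union_eq Set.disjoint_image_inl_image_inr,
    Set.ncard_image_of_injective _ Sum.inl_injective,
    Set.ncard_image_of_injective _ Sum.inr_injective]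

namespace completeBipartiteGraph

variable {α β : Type*}

def doubleStar (c : α) (d : β) (P : Set β) (Q : Set α) :
    (completeBipartiteGraph α β).Subgraph where
  verts := Sum.inl '' insert c Q ∪ Sum.inr '' insert d P
  Adj
    | .inl y, .inr x | .inr x, .inl y => y = c ∧ x ∈ insert d P ∨ x = d ∧ y ∈ insert c Q
    | _, _ => False
  adj_sub := by
    rintro (y | x) (y' | x') h <;> simp_all
  edge_vert := by
    rintro (y | x) (y' | x') h <;> aesop
  symm := ⟨by rintro (y | x) (y' | x') h <;> exact h⟩

section DoubleStar

variable {c : α} {d : β} {P : Set β} {Q : Set α}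

@[simp]
lemma inl_mem_doubleStar_verts {y : α} :
    Sum.inl y ∈ (doubleStar c d P Q).verts ↔ y ∈ insert c Q := by
  simp [doubleStar]

@[simp]
lemma inr_mem_doubleStar_verts {x : β} :
    Sum.inr x ∈ (doubleStar c d P Q).verts ↔ x ∈ insert d P := by
  simp [doubleStar]

@[simp]
lemma doubleStar_adj_inl_inr {y : α} {x : β} :
    (doubleStar c d P Q).Adj (.inl y) (.inr x) ↔
      y = c ∧ x ∈ insert d P ∨ x = d ∧ y ∈ insert c Q :=
  Iff.rfl

@[simp]
lemma doubleStar_adj_inr_inl {x : β} {y : α} :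
    (doubleStar c d P Q).Adj (.inr x) (.inl y) ↔
      y = c ∧ x ∈ insert d P ∨ x = d ∧ y ∈ insert c Q :=
  Iff.rfl

@[simp]
lemma not_doubleStar_adj_inl_inl {y y' : α} : ¬(doubleStar c d P Q).Adj (.inl y) (.inl y') :=
  id

@[simp]
lemma not_doubleStar_adj_inr_inr {x x' : β} : ¬(doubleStar c d P Q).Adj (.inr x) (.inr x') :=
  id

lemma doubleStar_isTree : (doubleStar c d P Q).coe.IsTree := by
  set T := doubleStar c d P Q
  let l : T.verts := ⟨.inl c, by simp [T]⟩
  let r : T.verts := ⟨.inr d, by simp [T]⟩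
  refine ⟨?_, isAcyclic_of_subsingleton_neighborSet l r ?_⟩
  · have hrl : T.coe.Adj r l := (doubleStar_adj_inl_inr.mpr (.inl ⟨rfl, .inl rfl⟩)).symm
    have reach : ∀ v, T.coe.Reachable v l := by
      rintro ⟨y | x, hv⟩
      · have : T.coe.Adj ⟨.inl y, hv⟩ r :=
          doubleStar_adj_inl_inr.mpr (.inr ⟨rfl, by simpa [T] using hv⟩)
        exact this.reachable.trans hrl.reachable
      · have : T.coe.Adj l ⟨.inr x, hv⟩ :=
          doubleStar_adj_inl_inr.mpr (.inl ⟨rfl, by simpa [T] using hv⟩)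
        exact this.reachable.symm
    have : Nonempty T.verts := ⟨l⟩
    exact ⟨fun v w => (reach v).trans (reach w).symm⟩
  · rintro ⟨y | x, hv⟩ hl hr ⟨y₁ | x₁, _⟩ h₁ ⟨y₂ | x₂, _⟩ h₂ <;> simp_all [T, l, r]

end DoubleStar

lemma disjoint_doubleStar_edgeSet {c c' : α} {d d' : β} {P P' : Set β} {Q Q' : Set α}
    (h : ∀ y x, (doubleStar c d P Q).Adj (.inl y) (.inr x) →
      ¬(doubleStar c' d' P' Q').Adj (.inl y) (.inr x)) :
    Disjoint (doubleStar c d P Q).edgeSet (doubleStar c' d' P' Q').edgeSet := by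
  refine Set.disjoint_left.mpr fun e he he' => ?_
  induction e using Sym2.ind with | _ v w => ?_
  rcases v with y | x <;> rcases w with y' | x' <;>
    simp only [Subgraph.mem_edgeSet, not_doubleStar_adj_inl_inl,
      not_doubleStar_adj_inr_inr] at he he'
  · exact h y x' he he'
  · exact h y' x he.symm he'.symm

lemma internallyDisjointTrees_doubleStar [Fintype α] (S : Set (α ⊕ β)) (ρ : α → β)
    (hcoll : ∀ i j, i ≠ j → ρ i = ρ j → Sum.inr (ρ i) ∈ S ∧ ∀ y, Sum.inl y ∉ S)
    (hleft : ∀ i j, Sum.inl i ∈ S → j ≠ i → Sum.inr (ρ j) ∉ S) :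
    InternallyDisjointTrees (completeBipartiteGraph α β) S (Fintype.card α) := by
  refine internallyDisjointTrees_of_pairwise
    (fun i => doubleStar i (ρ i) (Sum.inr ⁻¹' S) (Sum.inl ⁻¹' S))
    (fun i => doubleStar_isTree) ?_ ?_ ?_
  · rintro i (y | x) h <;> simp [h]
  · intro m n hmn
    ext (y | x)
    · simp only [Set.mem_inter_iff, inl_mem_doubleStar_verts, Set.mem_insert_iff,
        Set.mem_preimage]
      grind
    · simp only [Set.mem_inter_iff, inr_mem_doubleStar_verts, Set.mem_insert_iff,
        Set.mem_preimage]
      grind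
  · intro m n hmn
    refine disjoint_doubleStar_edgeSet fun y x hm hn => ?_
    simp only [doubleStar_adj_inl_inr, Set.mem_insert_iff, Set.mem_preimage] at hm hn
    grind

lemma exists_doubleStar_centres [Fintype α] [Fintype β] (S : Set (α ⊕ β)) (h2 : 2 ≤ S.ncard)
    (hS : S.ncard + Fintype.card α ≤ Fintype.card β + 2) :
    ∃ ρ : α → β, (∀ i j, i ≠ j → ρ i = ρ j → Sum.inr (ρ i) ∈ S ∧ ∀ y, Sum.inl y ∉ S) ∧
      ∀ i j, Sum.inl i ∈ S → j ≠ i → Sum.inr (ρ j) ∉ S := by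
  classical
  set A := Sum.inl ⁻¹' S
  set B := Sum.inr ⁻¹' S
  have hAB : A.ncard + B.ncard = S.ncard := S.ncard_preimage_inl_add_ncard_preimage_inr
  have hBc : Fintype.card ↥Bᶜ = Fintype.card β - B.ncard := by
    rw [Fintype.card_compl_set, Set.ncard_eq_toFinset_card', Set.toFinset_card]
  by_cases hB : B.ncard + Fintype.card α ≤ Fintype.card β
  · obtain ⟨f⟩ := Function.Embedding.nonempty_of_card_le (α := α) (β := ↥Bᶜ) (by omega)
    exact ⟨fun i => f i, fun i j hij h => absurd (f.injective (Subtype.ext h)) hij,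
      fun _ j _ _ => (f j).2⟩
  obtain ⟨w, hw⟩ : B.Nonempty := Set.nonempty_of_ncard_ne_zero (by omega)
  obtain hA | ⟨u, hu⟩ := (Set.ncard_le_one_iff_eq (Set.toFinite A)).mp (by omega)
  · have hA' : ∀ y, Sum.inl y ∉ S := Set.eq_empty_iff_forall_notMem.mp hA
    exact ⟨fun _ => w, fun _ _ _ _ => ⟨hw, hA'⟩, fun i _ hi => absurd hi (hA' i)⟩
  · obtain ⟨f⟩ := Function.Embedding.nonempty_of_card_le (α := {j // j ≠ u}) (β := ↥Bᶜ) (by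
      rw [hBc, Fintype.card_subtype_compl, Fintype.card_subtype_eq]
      have : A.ncard = 1 := by simp [hu]
      omega)
    refine ⟨fun j => if h : j = u then w else f ⟨j, h⟩, ?_, fun i j hi hj => ?_⟩
    · intro i j hij h
      exfalso
      dsimp only at h
      split_ifs at h with hi hj hj
      · exact hij (hi.trans hj.symm)
      · exact (f _).2 (h ▸ hw)
      · exact (f _).2 (h ▸ hw)
      · exact hij (congrArg Subtype.val (f.injective (Subtype.ext h)))
    · obtain rfl : i = u := (Set.ext_iff.mp hu i).mp hi
      dsimp only
      rw [dif_neg hj]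
      exact (f ⟨j, hj⟩).2

lemma card_le_kappaS [Fintype α] [Fintype β] {S : Set (α ⊕ β)} (h2 : 2 ≤ S.ncard)
    (hS : S.ncard + Fintype.card α ≤ Fintype.card β + 2) :
    Fintype.card α ≤ kappaS (completeBipartiteGraph α β) S := by
  obtain ⟨ρ, hcoll, hleft⟩ := exists_doubleStar_centres S h2 hS
  exact (internallyDisjointTrees_doubleStar S ρ hcoll hleft).le_kappaS h2

lemma nat_card_neighborSet_inr (x : β) :
    Nat.card ((completeBipartiteGraph α β).neighborSet (.inr x)) = Nat.card α := by
  have : (completeBipartiteGraph α β).neighborSet (.inr x) = Set.range Sum.inl := by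
    ext (y | x) <;> simp
  rw [this, Nat.card_range_of_injective Sum.inl_injective]

end completeBipartiteGraph

theorem stmt_8 (a b k : ℕ) (ha : 1 ≤ a) (hab : a ≤ b) (hk2 : 2 ≤ k)
    (hk : k ≤ b - a + 2) :
    kappaK (completeBipartiteGraph (Fin a) (Fin b)) k = a := by
  set G := completeBipartiteGraph (Fin a) (Fin b)
  let x : Fin a ⊕ Fin b := .inr ⟨0, by omega⟩
  obtain ⟨S₀, hxS₀, -, hS₀⟩ := Set.exists_subsuperset_card_eq ({x} : Set _).subset_univ
    (by simp; omega) (by simp; omega : k ≤ Set.univ.ncard)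
  apply le_antisymm
  · calc kappaK G k ≤ kappaS G S₀ := Nat.sInf_le ⟨S₀, hS₀, rfl⟩
      _ ≤ Nat.card (G.neighborSet x) := kappaS_le_card_neighborSet (by omega) (hxS₀ rfl)
      _ = a := by rw [completeBipartiteGraph.nat_card_neighborSet_inr, Nat.card_fin]
  · refine le_csInf ⟨_, S₀, hS₀, rfl⟩ ?_
    rintro _ ⟨S, hS, rfl⟩
    exact (Fintype.card_fin a).ge.trans <| completeBipartiteGraph.card_le_kappaS (hS ▸ hk2)
      (by rw [hS, Fintype.card_fin, Fintype.card_fin]; omega)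
end

section
/- Let S be a set of i+( k-i) vertices of K_{a,b} consisting of i vertices from the part X of size a and k-i vertices from the part Y of size b, with 1 ≤ i ≤ k-1. Then any family of pairwise edge-disjoint trees, each containing S with vertex set exactly S together with at most one extra vertex from each side, in which p trees use no vertex outside S and q trees use exactly one extra vertex from X, satisfies p(k-1) + q·i ≤ i(k-i). -/
theorem stmt_12 (a b i k p q : ℕ) (hi1 : 1 ≤ i) (hik : i ≤ k - 1)
    (XS : Finset (Fin a)) (YS : Finset (Fin b))
    (hX : XS.card = i) (hY : YS.card = k - i)
    (S : Set (Fin a ⊕ Fin b)) (hS : S = Sum.inl '' ↑XS ∪ Sum.inr '' ↑YS)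
    (T : Fin (p + q) → (completeBipartiteGraph (Fin a) (Fin b)).Subgraph)
    (htree : ∀ n, (T n).coe.IsTree)
    (hcont : ∀ n, S ⊆ (T n).verts)
    (hp : ∀ n : Fin (p + q), (n : ℕ) < p → (T n).verts = S)
    (hq : ∀ n : Fin (p + q), p ≤ (n : ℕ) →
      ∃ u : Fin a, u ∉ XS ∧ (T n).verts = S ∪ {Sum.inl u})
    (hdisj : ∀ m n, m ≠ n → (T m).edgeSet ∩ (T n).edgeSet = ∅) :
    p * (k - 1) + q * i ≤ i * (k - i) := by
  classical
  have hk : i + 1 ≤ k := by omega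
  -- the edges inside S
  set E : Finset (Sym2 (Fin a ⊕ Fin b)) :=
    (XS ×ˢ YS).image (fun z => s(Sum.inl z.1, Sum.inr z.2)) with hE
  have hinj : Function.Injective
      (fun z : Fin a × Fin b => s(Sum.inl z.1, Sum.inr z.2)) := by
    rintro ⟨x, y⟩ ⟨x', y'⟩ h
    simp only [Sym2.eq_iff] at h
    rcases h with ⟨h1, h2⟩ | ⟨h1, h2⟩
    · simp_all
    · simp_all
  have hEcard : E.card = i * (k - i) := by
    rw [hE, Finset.card_image_of_injective _ hinj, Finset.card_product, hX, hY]
  have hSfin : S.Finite := by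
    rw [hS]
    exact (XS.finite_toSet.image _).union (YS.finite_toSet.image _)
  -- any edge of a subgraph with both ends in S lies in E
  have hmemE : ∀ (n : Fin (p + q)) (v w : Fin a ⊕ Fin b),
      (T n).Adj v w → v ∈ S → w ∈ S → s(v, w) ∈ E := by
    intro n v w hadj hvS hwS
    have hpar := (T n).adj_sub hadj
    rw [hS] at hvS hwS
    rcases hvS with ⟨x, hx, rfl⟩ | ⟨y, hy, rfl⟩
    · rcases hwS with ⟨x', hx', rfl⟩ | ⟨y, hy, rfl⟩
      · simp at hpar
      · exact Finset.mem_image.2 ⟨(x, y), Finset.mem_product.2 ⟨hx, hy⟩, rfl⟩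
    · rcases hwS with ⟨x, hx, rfl⟩ | ⟨y', hy', rfl⟩
      · rw [Sym2.eq_swap]
        exact Finset.mem_image.2 ⟨(x, y), Finset.mem_product.2 ⟨hx, hy⟩, rfl⟩
      · simp at hpar
  set F : Fin (p + q) → Finset (Sym2 (Fin a ⊕ Fin b)) :=
    fun n => E.filter (fun e => e ∈ (T n).edgeSet) with hF
  have hFsub : ∀ n, F n ⊆ E := fun n => Finset.filter_subset _ _
  have hdisjF : ∀ m n, m ≠ n → Disjoint (F m) (F n) := by
    intro m n hmn
    rw [Finset.disjoint_left]
    intro e hem hen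
    have h1 : e ∈ (T m).edgeSet := (Finset.mem_filter.1 hem).2
    have h2 : e ∈ (T n).edgeSet := (Finset.mem_filter.1 hen).2
    have : e ∈ (T m).edgeSet ∩ (T n).edgeSet := ⟨h1, h2⟩
    rw [hdisj m n hmn] at this
    exact this
  have hsum : ∑ n : Fin (p + q), (F n).card ≤ E.card := by
    rw [← Finset.card_biUnion (fun m _ n _ hmn => hdisjF m n hmn)]
    exact Finset.card_le_card (Finset.biUnion_subset.2 fun n _ => hFsub n)
  -- lower bounds on each |F n|
  have hlow : ∀ n : Fin (p + q), (if (n : ℕ) < p then k - 1 else i) ≤ (F n).card := by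
    intro n
    by_cases hn : (n : ℕ) < p
    · -- a tree with vertex set S has k - 1 edges, all in E
      rw [if_pos hn]
      have hv : (T n).verts = S := hp n hn
      have hfin : (T n).verts.Finite := by rw [hv]; exact hSfin
      haveI : Fintype ((T n).verts : Set _) := hfin.fintype
      haveI : Fintype (T n).coe.edgeSet := Fintype.ofFinite _
      have hcardV : Fintype.card ((T n).verts : Set _) = k := by
        have h1 : ((T n).verts : Set _).ncard = k := by
          rw [hv, hS, Set.ncard_union_eq]
          · rw [Set.ncard_image_of_injective _ Sum.inl_injective,
              Set.ncard_image_of_injective _ Sum.inr_injective,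
              Set.ncard_coe_finset, Set.ncard_coe_finset, hX, hY]
            omega
          · rw [Set.disjoint_left]
            rintro z ⟨x, _, rfl⟩ ⟨y, _, h⟩
            exact absurd h (by simp)
        rw [← h1, Set.ncard_eq_toFinset_card', Set.toFinset_card]
      have htc := (htree n).card_edgeFinset
      rw [hcardV] at htc
      have hmap : ∀ e ∈ (T n).coe.edgeFinset, Sym2.map Subtype.val e ∈ F n := by
        intro e he
        rw [SimpleGraph.mem_edgeFinset] at he
        induction e with
        | h v w =>
          rw [SimpleGraph.mem_edgeSet, SimpleGraph.Subgraph.coe_adj] at he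
          refine Finset.mem_filter.2 ⟨?_, he⟩
          exact hmemE n _ _ he (hv ▸ v.2) (hv ▸ w.2)
      have hle := Finset.card_le_card_of_injOn _ hmap
        ((Sym2.map.injective Subtype.val_injective).injOn)
      omega
    · -- a tree with one extra X-vertex has at least i edges inside E
      rw [if_neg hn]
      push_neg at hn
      obtain ⟨u, hu, hv⟩ := hq n hn
      have hYne : YS.Nonempty := by
        rw [← Finset.card_pos, hY]; omega
      obtain ⟨y0, hy0⟩ := hYne
      have hy0v : (Sum.inr y0 : Fin a ⊕ Fin b) ∈ (T n).verts := by
        rw [hv]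
        exact Or.inl (by rw [hS]; exact Or.inr ⟨y0, hy0, rfl⟩)
      have hex : ∀ x ∈ XS, ∃ y, y ∈ YS ∧ (T n).Adj (Sum.inl x) (Sum.inr y) := by
        intro x hx
        have hxv : (Sum.inl x : Fin a ⊕ Fin b) ∈ (T n).verts := by
          rw [hv]
          exact Or.inl (by rw [hS]; exact Or.inl ⟨x, hx, rfl⟩)
        have hreach := (htree n).isConnected.preconnected ⟨Sum.inl x, hxv⟩ ⟨Sum.inr y0, hy0v⟩
        obtain ⟨W⟩ := hreach
        have hnil : ¬ W.Nil := SimpleGraph.Walk.not_nil_of_ne (by simp)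
        have hadj := W.adj_snd hnil
        rw [SimpleGraph.Subgraph.coe_adj] at hadj
        have hpar := (T n).adj_sub hadj
        have hw := (W.getVert 1).2
        rcases hval : ((W.getVert 1) : Fin a ⊕ Fin b) with x' | y
        · rw [hval] at hpar; simp at hpar
        · rw [hval] at hadj hw
          refine ⟨y, ?_, hadj⟩
          rw [hv] at hw
          rcases hw with hw | hw
          · rw [hS] at hw
            rcases hw with ⟨x', _, h⟩ | ⟨y', hy', h⟩
            · exact absurd h (by simp)
            · rw [Sum.inr.injEq] at h; exact h ▸ hy'
          · exact absurd hw (by simp)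
      have hmap : ∀ x ∈ XS,
          (if h : ∃ y, y ∈ YS ∧ (T n).Adj (Sum.inl x) (Sum.inr y)
            then s(Sum.inl x, Sum.inr h.choose) else s(Sum.inl x, Sum.inr y0)) ∈ F n := by
        intro x hx
        have h := hex x hx
        rw [dif_pos h]
        obtain ⟨hy1, hy2⟩ := h.choose_spec
        refine Finset.mem_filter.2 ⟨?_, hy2⟩
        exact Finset.mem_image.2 ⟨(x, h.choose), Finset.mem_product.2 ⟨hx, hy1⟩, rfl⟩
      have hinjOn : ∀ x ∈ XS, ∀ x' ∈ XS,
          (if h : ∃ y, y ∈ YS ∧ (T n).Adj (Sum.inl x) (Sum.inr y)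
            then s(Sum.inl x, Sum.inr h.choose) else s(Sum.inl x, Sum.inr y0)) =
          (if h : ∃ y, y ∈ YS ∧ (T n).Adj (Sum.inl x') (Sum.inr y)
            then s(Sum.inl x', Sum.inr h.choose) else s(Sum.inl x', Sum.inr y0)) →
          x = x' := by
        intro x _ x' _ hgg
        split_ifs at hgg <;>
          · simp only [Sym2.eq_iff] at hgg
            rcases hgg with ⟨h1, _⟩ | ⟨h1, _⟩
            · exact Sum.inl_injective h1
            · exact absurd h1 (by simp)
      have hle := Finset.card_le_card_of_injOn _ hmap hinjOn
      omega
  -- put everything together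
  have hsplit : p * (k - 1) + q * i
      = ∑ n : Fin (p + q), (if (n : ℕ) < p then k - 1 else i) := by
    rw [Fin.sum_univ_eq_sum_range (fun m => if m < p then k - 1 else i)]
    rw [Finset.sum_range_add (fun m => if m < p then k - 1 else i)]
    have h1 : ∑ m ∈ Finset.range p, (if m < p then k - 1 else i) = p * (k - 1) := by
      rw [Finset.sum_congr rfl (fun m hm => if_pos (Finset.mem_range.1 hm))]
      simp [mul_comm]
    have h2 : ∑ m ∈ Finset.range q, (if p + m < p then k - 1 else i) = q * i := by
      rw [Finset.sum_congr rfl (fun m _ => if_neg (by omega))]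
      simp [mul_comm]
    rw [h1, h2]
  calc p * (k - 1) + q * i = ∑ n : Fin (p + q), (if (n : ℕ) < p then k - 1 else i) := hsplit
    _ ≤ ∑ n : Fin (p + q), (F n).card := Finset.sum_le_sum (fun n _ => hlow n)
    _ ≤ E.card := hsum
    _ = i * (k - i) := hEcard
end

section
/- Let i, k, p, q be nonnegative integers with 1 ≤ i ≤ k-1 and p(k-1) + q·i ≤ i(k-i). Then in the complete bipartite graph with parts S∩X of size i and S∩Y of size k-i, augmented by q extra vertices u_1, ..., u_q joined to all of S∩Y, there exist p pairwise edge-disjoint spanning trees of the complete bipartite graph K_{i,k-i} on S, together with q additional trees T_{p+1}, ..., T_{p+q}, where T_{p+m} has vertex set S ∪ {u_m} with u_m adjacent to all of S∩Y and each vertex of S∩X a leaf, such that all p+q trees are pairwise edge-disjoint. -/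
/-!
Write `a = i` and `b = k - i`, and read a column `y ∈ S ∩ Y` as a residue mod `b`. With
`stair j = ⌊j (b - 1) / a⌋` and `s_t(x) = stair (x + t) + t`, the `t`-th spanning tree joins the row
`x ∈ S ∩ X` to the residues of the integers in `[s_t(x), s_t(x + 1)]`. Consecutive rows share one
column and the rows together sweep out the `b` consecutive integers `[s_t(0), s_t(0) + b - 1]`,
so this is a caterpillar spanning `K_{a,b}`. The `m`-th extra tree joins `u_m` to every column and
the row `x` to the residue of `s_p(x) + m`.

On a fixed row `x` these `p` intervals and `q` points are pairwise disjoint, and the counting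
hypothesis `p (a + b - 1) + q a ≤ a b` is exactly what puts all of them inside the window
`[stair x, stair x + b)`; hence their residues are distinct and the trees are edge-disjoint.
Each tree is certified by a parent map that strictly lowers a height function.
-/

open Sum

namespace SimpleGraph

variable {V : Type*} {G : SimpleGraph V}

theorem isTree_of_parent (r : V) (f : V → V) (h : V → ℕ)
    (hpar : ∀ v, v ≠ r → G.Adj v (f v) ∧ h (f v) < h v)
    (hedge : ∀ v w, G.Adj v w → h w ≤ h v → w = f v) : G.IsTree := by
  have hreach (v : V) : G.Reachable v r := by
    induction hv : h v using Nat.strong_induction_on generalizing v with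
    | _ n ih =>
      by_cases hvr : v = r
      · exact hvr ▸ Reachable.refl v
      · obtain ⟨hadj, hlt⟩ := hpar v hvr
        exact hadj.reachable.trans (ih _ (hv ▸ hlt) _ rfl)
  have : Nonempty V := ⟨r⟩
  refine ⟨⟨fun v w => (hreach v).trans (hreach w).symm⟩, fun v c hc => ?_⟩
  classical
  -- at a vertex `u` of maximal height on the cycle, both cycle neighbours must be `f u`
  obtain ⟨u, hu, hmax⟩ := c.support.toFinset.exists_max_image h ⟨v, by simp⟩
  rw [List.mem_toFinset] at hu
  have hsub : c.toSubgraph.neighborSet u ⊆ {f u} := fun w hw =>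
    hedge u w (c.toSubgraph.adj_sub hw)
      (hmax w (List.mem_toFinset.2 (Walk.mem_support_of_adj_toSubgraph hw.symm)))
  have := (Set.ncard_le_ncard hsub).trans_eq (Set.ncard_singleton _)
  rw [hc.ncard_neighborSet_toSubgraph_eq_two hu] at this
  omega

theorem Subgraph.isTree_coe_of_parent {H : G.Subgraph} {r : V} (hr : r ∈ H.verts) {f : V → V}
    (hf : Set.MapsTo f H.verts H.verts) (h : V → ℕ)
    (hpar : ∀ v ∈ H.verts, v ≠ r → H.Adj v (f v) ∧ h (f v) < h v)
    (hedge : ∀ v w, H.Adj v w → h w ≤ h v → w = f v) : H.coe.IsTree :=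
  isTree_of_parent ⟨r, hr⟩ (hf.restrict f _ _) (fun v => h v)
    (fun v hv => hpar v v.2 (fun e => hv (Subtype.ext e)))
    (fun v w hvw hle => Subtype.ext (hedge v w hvw hle))

variable {α β : Type*}

def bipartiteAdj (r : α → β → Prop) : α ⊕ β → α ⊕ β → Prop
  | inl x, inr y => r x y
  | inr y, inl x => r x y
  | _, _ => False

def bipartiteSubgraph (s : Set (α ⊕ β)) (r : α → β → Prop)
    (hr : ∀ x y, r x y → inl x ∈ s ∧ inr y ∈ s) : (completeBipartiteGraph α β).Subgraph where
  verts := s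
  Adj := bipartiteAdj r
  adj_sub := by rintro (x | y) (x' | y') h <;> simp_all [bipartiteAdj]
  edge_vert := by
    rintro (x | y) (x' | y') h
    exacts [h.elim, (hr x y' h).1, (hr x' y h).2, h.elim]
  symm := ⟨by rintro (x | y) (x' | y') h <;> exact h⟩

theorem bipartiteSubgraph_edgeSet_inter_eq_empty {s s' : Set (α ⊕ β)} {r r' : α → β → Prop}
    {hr : ∀ x y, r x y → inl x ∈ s ∧ inr y ∈ s} {hr' : ∀ x y, r' x y → inl x ∈ s' ∧ inr y ∈ s'}
    (h : ∀ x y, r x y → ¬ r' x y) :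
    (bipartiteSubgraph s r hr).edgeSet ∩ (bipartiteSubgraph s' r' hr').edgeSet = ∅ := by
  refine Set.eq_empty_iff_forall_notMem.2 fun e he => ?_
  induction e using Sym2.ind with
  | _ v w =>
    obtain ⟨h1, h2⟩ := he
    rcases v with x | y <;> rcases w with x' | y' <;>
      simp_all [bipartiteSubgraph, bipartiteAdj]

end SimpleGraph

open SimpleGraph Sum

namespace SpanningTreePacking

variable {a b : ℕ}

theorem mod_ne_of_lt_of_lt_add {L c c' : ℕ} (hL : L ≤ c) (hcc' : c < c') (hc' : c' < L + b) :
    c % b ≠ c' % b := fun h =>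
  hcc'.ne (Nat.mod_injOn_Ico L b (by simp; omega) (by simp; omega) h)

def stair (a b j : ℕ) : ℕ := j * (b - 1) / a

def rowStart (a b t x : ℕ) : ℕ := stair a b (x + t) + t

def leafPos (a b p m x : ℕ) : ℕ := rowStart a b p x + m

def Covers (a b t x y : ℕ) : Prop :=
  ∃ c, rowStart a b t x ≤ c ∧ c ≤ rowStart a b t (x + 1) ∧ c % b = y

theorem stair_mono : Monotone (stair a b) := fun _ _ h =>
  Nat.div_le_div_right (Nat.mul_le_mul_right _ h)

theorem stair_add_self (ha : 0 < a) (j : ℕ) : stair a b (j + a) = stair a b j + (b - 1) := by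
  rw [stair, Nat.add_mul, Nat.add_mul_div_left _ _ ha, stair]

theorem rowStart_mono (t : ℕ) : Monotone (rowStart a b t) := fun _ _ h =>
  Nat.add_le_add_right (stair_mono (Nat.add_le_add_right h t)) t

theorem rowStart_self (ha : 0 < a) (t : ℕ) : rowStart a b t a = rowStart a b t 0 + (b - 1) := by
  simp only [rowStart, zero_add, add_comm a t, stair_add_self ha]
  omega

theorem rowStart_add_le {p q : ℕ} (ha : 0 < a) (hb : 0 < b)
    (hcount : p * (a + b - 1) + q * a ≤ a * b) (x : ℕ) :
    rowStart a b p x + q ≤ stair a b x + b := by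
  have hsplit : p * (a + b - 1) = p * (b - 1) + a * p := by
    rw [show a + b - 1 = (b - 1) + a by omega, Nat.mul_add, mul_comm p a]
  obtain ⟨d, rfl⟩ : ∃ d, b = p + q + d := by
    refine ⟨b - (p + q), ?_⟩
    have : a * (p + q) ≤ a * b := by nlinarith
    have := Nat.le_of_mul_le_mul_left this ha
    omega
  have hslack : p * (p + q + d - 1) ≤ a * d := by nlinarith
  have : stair a (p + q + d) (x + p) ≤ stair a (p + q + d) x + d :=
    calc (x + p) * (p + q + d - 1) / a = (x * (p + q + d - 1) + p * (p + q + d - 1)) / a := by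
          rw [Nat.add_mul]
      _ ≤ (x * (p + q + d - 1) + a * d) / a := Nat.div_le_div_right (by omega)
      _ = stair a (p + q + d) x + d := Nat.add_mul_div_left _ _ ha
  simp only [rowStart]
  omega

theorem stair_le_rowStart (t x : ℕ) : stair a b x ≤ rowStart a b t x :=
  (stair_mono (Nat.le_add_right x t)).trans (Nat.le_add_right _ t)

theorem rowStart_succ_lt {t s : ℕ} (h : t < s) (x : ℕ) :
    rowStart a b t (x + 1) < rowStart a b s x := by
  have := stair_mono (a := a) (b := b) (show x + 1 + t ≤ x + s by omega)
  simp only [rowStart]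
  omega

theorem not_covers_of_covers {p q t t' x y : ℕ} (ha : 0 < a) (hb : 0 < b)
    (hcount : p * (a + b - 1) + q * a ≤ a * b) (htt' : t < t') (ht' : t' < p)
    (h : Covers a b t x y) : ¬ Covers a b t' x y := by
  rintro ⟨c', hc'₁, hc'₂, rfl⟩
  obtain ⟨c, hc₁, hc₂, hc⟩ := h
  have := rowStart_add_le ha hb hcount x
  have := stair_le_rowStart (a := a) (b := b) t x
  have := rowStart_succ_lt (a := a) (b := b) htt' x
  have := rowStart_succ_lt (a := a) (b := b) ht' x
  exact mod_ne_of_lt_of_lt_add (L := stair a b x) (by omega) (by omega) (by omega) hc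

theorem covers_ne_leafPos {p q t m x y : ℕ} (ha : 0 < a) (hb : 0 < b)
    (hcount : p * (a + b - 1) + q * a ≤ a * b) (ht : t < p) (hm : m < q)
    (h : Covers a b t x y) : y ≠ leafPos a b p m x % b := by
  obtain ⟨c, hc₁, hc₂, rfl⟩ := h
  have := rowStart_add_le ha hb hcount x
  have := stair_le_rowStart (a := a) (b := b) t x
  have := rowStart_succ_lt (a := a) (b := b) ht x
  exact mod_ne_of_lt_of_lt_add (L := stair a b x) (by omega) (by simp only [leafPos]; omega)
    (by simp only [leafPos]; omega)

theorem leafPos_mod_ne {p q m m' : ℕ} (ha : 0 < a) (hb : 0 < b)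
    (hcount : p * (a + b - 1) + q * a ≤ a * b) (hmm' : m < m') (hm' : m' < q) (x : ℕ) :
    leafPos a b p m x % b ≠ leafPos a b p m' x % b := by
  have := rowStart_add_le ha hb hcount x
  have := stair_le_rowStart (a := a) (b := b) p x
  exact mod_ne_of_lt_of_lt_add (L := stair a b x) (by simp only [leafPos]; omega)
    (by simp only [leafPos]; omega) (by simp only [leafPos]; omega)

theorem covers_rowStart (t x : ℕ) : Covers a b t x (rowStart a b t x % b) :=
  ⟨_, le_rfl, rowStart_mono t (Nat.le_succ x), rfl⟩

theorem covers_rowStart_succ (t x : ℕ) : Covers a b t x (rowStart a b t (x + 1) % b) :=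
  ⟨_, rowStart_mono t (Nat.le_succ x), le_rfl, rfl⟩

theorem exists_covers (ha : 0 < a) (t : ℕ) {y : ℕ} (hy : y < b) :
    ∃ x < a, Covers a b t x y := by
  -- the integer `c` of residue `y` in the sweep `[s_t(0), s_t(0) + b)` is reached by a first row
  obtain ⟨c, hc, rfl⟩ := Finset.mem_image.1
    ((Nat.image_Ico_mod (rowStart a b t 0) b).symm ▸ Finset.mem_range.2 hy)
  rw [Finset.mem_Ico] at hc
  have hlast : c ≤ rowStart a b t (a - 1 + 1) := by
    rw [Nat.sub_add_cancel ha, rowStart_self ha]; omega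
  have hex : ∃ x, c ≤ rowStart a b t (x + 1) := ⟨a - 1, hlast⟩
  refine ⟨Nat.find hex, (Nat.find_min' hex hlast).trans_lt (by omega),
    c, ?_, Nat.find_spec hex, rfl⟩
  rcases Nat.eq_zero_or_pos (Nat.find hex) with h | h
  · rw [h]; exact hc.1
  · have := Nat.find_min hex (m := Nat.find hex - 1) (by omega)
    rw [Nat.sub_add_cancel h] at this
    omega

theorem eq_rowStart_of_covers {t x x' y : ℕ} (hx : x < a) (hx' : x' < x)
    (h : Covers a b t x y) (h' : Covers a b t x' y) : y = rowStart a b t x % b := by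
  obtain ⟨c, hc₁, hc₂, rfl⟩ := h
  obtain ⟨c', hc'₁, hc'₂, hc'⟩ := h'
  have := rowStart_self (b := b) (show 0 < a by omega) t
  have := rowStart_mono (a := a) (b := b) t (Nat.zero_le x')
  have := rowStart_mono (a := a) (b := b) t (show x' + 1 ≤ x by omega)
  have := rowStart_mono (a := a) (b := b) t (show x + 1 ≤ a by omega)
  obtain rfl | hlt := eq_or_lt_of_le (show c' ≤ c by omega)
  · congr 1; omega
  · exact absurd hc' (mod_ne_of_lt_of_lt_add (L := rowStart a b t 0) (by omega) hlt (by omega))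

-- `core a q b` is `S`; the vertex `inl (inr m)` is the extra vertex `u_m`.
def core (a q b : ℕ) : Set ((Fin a ⊕ Fin q) ⊕ Fin b) := inl '' (inl '' Set.univ) ∪ inr '' Set.univ

theorem inl_inl_mem_core {q : ℕ} (x : Fin a) :
    (inl (inl x) : (Fin a ⊕ Fin q) ⊕ Fin b) ∈ core a q b := by
  simp [core]

theorem inr_mem_core {q : ℕ} (y : Fin b) : (inr y : (Fin a ⊕ Fin q) ⊕ Fin b) ∈ core a q b := by
  simp [core]

def spanningRel (a b t : ℕ) {q : ℕ} : Fin a ⊕ Fin q → Fin b → Prop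
  | inl x, y => Covers a b t x y
  | inr _, _ => False

def leafRel (a b p : ℕ) {q : ℕ} (m : Fin q) : Fin a ⊕ Fin q → Fin b → Prop
  | inl x, y => y = leafPos a b p m x % b
  | inr u, _ => u = m

def spanningTree (a q b t : ℕ) : (completeBipartiteGraph (Fin a ⊕ Fin q) (Fin b)).Subgraph :=
  bipartiteSubgraph (core a q b) (spanningRel a b t) <| by
    rintro (x | u) y h
    exacts [⟨inl_inl_mem_core x, inr_mem_core y⟩, h.elim]

def leafTree (a b p : ℕ) {q : ℕ} (m : Fin q) :
    (completeBipartiteGraph (Fin a ⊕ Fin q) (Fin b)).Subgraph :=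
  bipartiteSubgraph (core a q b ∪ {inl (inr m)}) (leafRel a b p m) <| by
    rintro (x | u) y h
    · exact ⟨.inl (inl_inl_mem_core x), .inl (inr_mem_core y)⟩
    · exact ⟨.inr (by rw [h]; rfl), .inl (inr_mem_core y)⟩

theorem spanningTree_isTree (ha : 0 < a) (hb : 0 < b) (q t : ℕ) :
    (spanningTree a q b t).coe.IsTree := by
  have hfirst (y : Fin b) :
      ∃ x : Fin a, Covers a b t x y ∧ ∀ x' : Fin a, Covers a b t x' y → x ≤ x' := by
    obtain ⟨x, hx, hcov⟩ := exists_covers ha t y.2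
    obtain ⟨x, hx, hmin⟩ :=
      WellFounded.has_min wellFounded_lt {x : Fin a | Covers a b t x y} ⟨⟨x, hx⟩, hcov⟩
    exact ⟨x, hx, fun x' hx' => not_lt.1 (hmin x' hx')⟩
  choose firstRow hfirstRow hmin using hfirst
  -- a column hangs from the first row covering it; a row `x > 0` hangs from its first column,
  -- which row `x - 1` covers as well
  let startCol (x : Fin a) : Fin b := ⟨rowStart a b t x % b, Nat.mod_lt _ hb⟩
  refine Subgraph.isTree_coe_of_parent (inl_inl_mem_core ⟨0, ha⟩)
    (f := fun
      | inl (inl x) => inr (startCol x)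
      | inl (inr u) => inl (inr u)
      | inr y => inl (inl (firstRow y)))
    ?_ (fun
      | inl (inl x) => 2 * x
      | inl (inr _) => 0
      | inr y => 2 * firstRow y + 1) ?_ ?_
  · rintro ((x | u) | y) hv
    exacts [inr_mem_core _, hv, inl_inl_mem_core _]
  · rintro ((x | u) | y) hv hvr
    · have hx : 0 < (x : ℕ) := Nat.pos_of_ne_zero fun h => hvr (by simp [Fin.ext_iff, h])
      refine ⟨covers_rowStart t x, ?_⟩
      dsimp only
      have := hmin (startCol x) ⟨x - 1, by omega⟩ (by
        simpa [startCol, Nat.sub_add_cancel hx] using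
          covers_rowStart_succ (a := a) (b := b) t (x - 1))
      simp only [Fin.le_def] at this
      omega
    · simp [spanningTree, bipartiteSubgraph, core] at hv
    · exact ⟨hfirstRow y, by dsimp only; omega⟩
  · rintro ((x | u) | y) ((x' | u') | y') hadj hle <;>
      simp only [spanningTree, bipartiteSubgraph, bipartiteAdj, spanningRel] at hadj
    · dsimp only at hle
      congr 1
      exact Fin.ext (eq_rowStart_of_covers x.2 (by omega) hadj (hfirstRow y'))
    · dsimp only at hle
      have := hmin y x' hadj
      simp only [Fin.le_def] at this
      congr 2
      exact Fin.ext (by omega)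

theorem leafTree_isTree (hb : 0 < b) (p : ℕ) {q : ℕ} (m : Fin q) :
    (leafTree a b p m).coe.IsTree := by
  let leafCol (x : Fin a) : Fin b := ⟨leafPos a b p m x % b, Nat.mod_lt _ hb⟩
  refine Subgraph.isTree_coe_of_parent (.inr rfl)
    (f := fun
      | inl (inl x) => inr (leafCol x)
      | inl (inr _) => inl (inr m)
      | inr _ => inl (inr m))
    ?_ (fun
      | inl (inl _) => 2
      | inl (inr _) => 0
      | inr _ => 1) ?_ ?_
  · rintro ((x | u) | y) -
    exacts [.inl (inr_mem_core _), .inr rfl, .inr rfl]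
  · rintro ((x | u) | y) hv hvr
    · exact ⟨rfl, Nat.one_lt_two⟩
    · simp_all [leafTree, bipartiteSubgraph, core]
    · exact ⟨rfl, Nat.zero_lt_one⟩
  · rintro ((x | u) | y) ((x' | u') | y') hadj hle <;>
      simp_all [leafTree, bipartiteSubgraph, bipartiteAdj, leafRel, leafCol, Fin.ext_iff]

theorem leafTree_adj_extra (p : ℕ) {q : ℕ} (m : Fin q) (y : Fin b) :
    (leafTree a b p m).Adj (inl (inr m)) (inr y) :=
  rfl

theorem leafTree_existsUnique_adj (hb : 0 < b) (p : ℕ) {q : ℕ} (m : Fin q) (x : Fin a) :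
    ∃! w, (leafTree a b p m).Adj (inl (inl x)) w := by
  refine ⟨inr ⟨leafPos a b p m x % b, Nat.mod_lt _ hb⟩, rfl, ?_⟩
  rintro ((x' | u) | y) h
  exacts [h.elim, h.elim, congrArg inr (Fin.ext h)]

def trees (a q b p : ℕ) :
    Fin (p + q) → (completeBipartiteGraph (Fin a ⊕ Fin q) (Fin b)).Subgraph :=
  Fin.addCases (fun t => spanningTree a q b t) (fun m => leafTree a b p m)

theorem trees_castAdd {p q : ℕ} (t : Fin p) :
    trees a q b p (Fin.castAdd q t) = spanningTree a q b t :=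
  Fin.addCases_left t

theorem trees_natAdd {p q : ℕ} (m : Fin q) : trees a q b p (Fin.natAdd p m) = leafTree a b p m :=
  Fin.addCases_right m

theorem trees_of_lt {p q : ℕ} {n : Fin (p + q)} (hn : (n : ℕ) < p) :
    trees a q b p n = spanningTree a q b n :=
  trees_castAdd ⟨n, hn⟩

theorem trees_of_eq_add {p q : ℕ} {n : Fin (p + q)} {m : Fin q} (hn : (n : ℕ) = p + m) :
    trees a q b p n = leafTree a b p m := by
  obtain rfl : n = Fin.natAdd p m := Fin.ext hn
  exact trees_natAdd m

theorem trees_isTree (ha : 0 < a) (hb : 0 < b) {p q : ℕ} (n : Fin (p + q)) :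
    (trees a q b p n).coe.IsTree := by
  induction n using Fin.addCases with
  | left t => rw [trees_castAdd]; exact spanningTree_isTree ha hb q t
  | right m => rw [trees_natAdd]; exact leafTree_isTree hb p m

section Packing

variable {p q : ℕ} (ha : 0 < a) (hb : 0 < b) (hcount : p * (a + b - 1) + q * a ≤ a * b)
include ha hb hcount

theorem spanningTree_edgeSet_inter {t t' : ℕ} (htt' : t ≠ t') (ht : t < p) (ht' : t' < p) :
    (spanningTree a q b t).edgeSet ∩ (spanningTree a q b t').edgeSet = ∅ := by
  refine bipartiteSubgraph_edgeSet_inter_eq_empty ?_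
  rintro (x | u) y h h'
  · rcases htt'.lt_or_gt with htt' | htt'
    exacts [not_covers_of_covers ha hb hcount htt' ht' h h',
      not_covers_of_covers ha hb hcount htt' ht h' h]
  · exact h

theorem spanningTree_edgeSet_inter_leafTree {t : ℕ} (ht : t < p) (m : Fin q) :
    (spanningTree a q b t).edgeSet ∩ (leafTree a b p m).edgeSet = ∅ := by
  refine bipartiteSubgraph_edgeSet_inter_eq_empty ?_
  rintro (x | u) y h h'
  exacts [covers_ne_leafPos ha hb hcount ht m.2 h h', h]

theorem leafTree_edgeSet_inter {m m' : Fin q} (hmm' : m ≠ m') :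
    (leafTree a b p m).edgeSet ∩ (leafTree a b p m').edgeSet = ∅ := by
  refine bipartiteSubgraph_edgeSet_inter_eq_empty ?_
  rintro (x | u) y h h'
  · rcases Fin.val_ne_of_ne hmm' |>.lt_or_gt with hlt | hlt
    exacts [leafPos_mod_ne ha hb hcount hlt m'.2 x (h.symm.trans h'),
      leafPos_mod_ne ha hb hcount hlt m.2 x (h'.symm.trans h)]
  · exact hmm' (h.symm.trans h')

theorem trees_edgeSet_inter {n n' : Fin (p + q)} (hnn' : n ≠ n') :
    (trees a q b p n).edgeSet ∩ (trees a q b p n').edgeSet = ∅ := by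
  induction n using Fin.addCases with
  | left t =>
    induction n' using Fin.addCases with
    | left t' =>
      rw [trees_castAdd, trees_castAdd]
      exact spanningTree_edgeSet_inter ha hb hcount (fun h => hnn' (congrArg _ (Fin.ext h)))
        t.2 t'.2
    | right m' =>
      rw [trees_castAdd, trees_natAdd]
      exact spanningTree_edgeSet_inter_leafTree ha hb hcount t.2 m'
  | right m =>
    induction n' using Fin.addCases with
    | left t' =>
      rw [trees_natAdd, trees_castAdd, Set.inter_comm]
      exact spanningTree_edgeSet_inter_leafTree ha hb hcount t'.2 m
    | right m' =>
      rw [trees_natAdd, trees_natAdd]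
      exact leafTree_edgeSet_inter ha hb hcount (fun h => hnn' (congrArg _ h))

end Packing

end SpanningTreePacking

open SpanningTreePacking

theorem stmt_13 (i k p q : ℕ) (hi1 : 1 ≤ i) (hik : i ≤ k - 1)
    (hcount : p * (k - 1) + q * i ≤ i * (k - i)) :
    -- vertices: left part is `S ∩ X` (of size `i`) together with the `q` extra
    -- vertices `u_1, …, u_q`; right part is `S ∩ Y` (of size `k - i`).
    ∃ T : Fin (p + q) → (completeBipartiteGraph (Fin i ⊕ Fin q) (Fin (k - i))).Subgraph,
      (∀ n, (T n).coe.IsTree) ∧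
      (∀ m n, m ≠ n → (T m).edgeSet ∩ (T n).edgeSet = ∅) ∧
      -- the first `p` trees are spanning trees of `K_{i,k-i}` on `S`
      (∀ n : Fin (p + q), (n : ℕ) < p →
        (T n).verts = Sum.inl '' (Sum.inl '' Set.univ) ∪ Sum.inr '' Set.univ) ∧
      -- the remaining `q` trees: the `m`-th has vertex set `S ∪ {u_m}`, with `u_m`
      -- adjacent to every vertex of `S ∩ Y` and every vertex of `S ∩ X` a leaf
      (∀ m : Fin q, ∀ n : Fin (p + q), (n : ℕ) = p + (m : ℕ) →
        (T n).verts =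
          (Sum.inl '' (Sum.inl '' Set.univ) ∪ Sum.inr '' Set.univ) ∪
            {Sum.inl (Sum.inr m)} ∧
        (∀ y : Fin (k - i), (T n).Adj (Sum.inl (Sum.inr m)) (Sum.inr y)) ∧
        (∀ x : Fin i, ∃! w, (T n).Adj (Sum.inl (Sum.inl x)) w)) := by
  have hb : 0 < k - i := by omega
  have hcount' : p * (i + (k - i) - 1) + q * i ≤ i * (k - i) := by
    rwa [show i + (k - i) - 1 = k - 1 by omega]
  refine ⟨trees i q (k - i) p, trees_isTree hi1 hb, fun _ _ => trees_edgeSet_inter hi1 hb hcount',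
    fun n hn => by rw [trees_of_lt hn]; rfl, fun m n hn => ?_⟩
  rw [trees_of_eq_add hn]
  exact ⟨rfl, leafTree_adj_extra p m, leafTree_existsUnique_adj hb p m⟩
end
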